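/- Let 0 < p < 1, q = 1−p, α = p/q, and let n ≥ 2t+1 ≥ 3 with u + v ≥ 2t + 1 for positive integers u ≤ v. If A ⊆ F^u and B ⊆ F^v (i.e., every walk in A hits the line y = x + u and every walk in B hits y = x + v), then μ_p(A)·μ_p(B) ≤ α^{2t+1}, provided p < 1/2. -/

import Mathlib

open Finset

noncomputable def mu (n : ℕ) (p : ℝ) (𝒜 : Finset (Finset (Fin n))) : ℝ :=
  ∑ A ∈ 𝒜, p ^ A.card * (1 - p) ^ (n - A.card)

/-- The family `F^ℓ` of subsets of `[n]` whose walk hits the line `y = x + ℓ`. -/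
def FamLine (n ℓ : ℕ) : Finset (Finset (Fin n)) :=
  Finset.univ.filter (fun F => ∃ j ≤ n,
    ℓ + j ≤ (F.filter (fun i => i.val < ℓ + 2 * j)).card)

/-!
Conditioning on the first step: a walk hitting `y = x + ℓ + 1` either starts with an up step and
its remaining `n - 1` steps hit `y = x + ℓ`, or starts with a down step and they hit
`y = x + ℓ + 2`. Hence `μ_p(F^{ℓ+1}) ≤ p μ_p(F^ℓ) + q μ_p(F^{ℓ+2})`, and since `α = p/q` solves
`p + q α² = α`, induction on `n` gives `μ_p(F^ℓ) ≤ α^ℓ`. For `p < 1/2` we have `α ≤ 1`, so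
`μ_p(A) μ_p(B) ≤ α^(u+v) ≤ α^(2t+1)`.
-/

section Measure

variable {n : ℕ} {p : ℝ}

lemma mu_nonneg (hp0 : 0 ≤ p) (hp1 : p ≤ 1) (𝒜 : Finset (Finset (Fin n))) : 0 ≤ mu n p 𝒜 :=
  sum_nonneg fun _ _ => mul_nonneg (pow_nonneg hp0 _) (pow_nonneg (sub_nonneg.2 hp1) _)

lemma mu_mono (hp0 : 0 ≤ p) (hp1 : p ≤ 1) {𝒜 ℬ : Finset (Finset (Fin n))} (h : 𝒜 ⊆ ℬ) :
    mu n p 𝒜 ≤ mu n p ℬ :=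
  sum_le_sum_of_subset_of_nonneg h fun _ _ _ =>
    mul_nonneg (pow_nonneg hp0 _) (pow_nonneg (sub_nonneg.2 hp1) _)

lemma mu_univ : mu n p univ = 1 := by
  rw [mu, Fin.sum_pow_mul_eq_add_pow, add_sub_cancel, one_pow]

lemma mu_le_one (hp0 : 0 ≤ p) (hp1 : p ≤ 1) (𝒜 : Finset (Finset (Fin n))) : mu n p 𝒜 ≤ 1 :=
  mu_univ (p := p) ▸ mu_mono hp0 hp1 (subset_univ 𝒜)

end Measure

section Tail

variable {n : ℕ}

def walkTail (F : Finset (Fin (n + 1))) : Finset (Fin n) := univ.filter (fun i => i.succ ∈ F)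

@[simp] lemma mem_walkTail {F : Finset (Fin (n + 1))} {i : Fin n} :
    i ∈ walkTail F ↔ i.succ ∈ F := by
  simp [walkTail]

lemma eq_of_walkTail_eq {F G : Finset (Fin (n + 1))} (h0 : 0 ∈ F ↔ 0 ∈ G)
    (h : walkTail F = walkTail G) : F = G := by
  ext i
  induction i using Fin.cases with
  | zero => exact h0
  | succ j => rw [← mem_walkTail, ← mem_walkTail, h]

lemma card_filter_eq_card_filter_walkTail (F : Finset (Fin (n + 1))) (P : Fin (n + 1) → Prop)
    [DecidablePred P] :
    #(F.filter P) = #((walkTail F).filter (P ∘ Fin.succ)) + if 0 ∈ F ∧ P 0 then 1 else 0 := by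
  conv_lhs => rw [← filter_univ_mem F, filter_filter, Fin.card_filter_univ_succ', add_comm]
  rw [walkTail, filter_filter]
  rfl

lemma card_eq_card_walkTail (F : Finset (Fin (n + 1))) :
    #F = #(walkTail F) + if 0 ∈ F then 1 else 0 := by
  simpa using card_filter_eq_card_filter_walkTail F (fun _ => True)

lemma card_filter_val_lt_succ (F : Finset (Fin (n + 1))) (m : ℕ) :
    #(F.filter (·.val < m + 1)) =
      #((walkTail F).filter (·.val < m)) + if 0 ∈ F then 1 else 0 := by
  simpa [Function.comp_def] using card_filter_eq_card_filter_walkTail F (·.val < m + 1)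

lemma card_walkTail_le (F : Finset (Fin (n + 1))) : #(walkTail F) ≤ n :=
  (card_le_univ _).trans_eq (Fintype.card_fin n)

lemma weight_eq_mul_weight_walkTail (p : ℝ) (F : Finset (Fin (n + 1))) :
    p ^ #F * (1 - p) ^ (n + 1 - #F) =
      (if 0 ∈ F then p else 1 - p) * (p ^ #(walkTail F) * (1 - p) ^ (n - #(walkTail F))) := by
  have hle := card_walkTail_le F
  rw [card_eq_card_walkTail F]
  split_ifs
  · rw [show n + 1 - (#(walkTail F) + 1) = n - #(walkTail F) by omega]
    ring
  · rw [show n + 1 - (#(walkTail F) + 0) = n - #(walkTail F) + 1 by omega]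
    ring

lemma sum_weight_eq_mu_image_walkTail (p : ℝ) (𝒞 : Finset (Finset (Fin (n + 1)))) (b : Prop)
    [Decidable b] (h𝒞 : ∀ F ∈ 𝒞, 0 ∈ F ↔ b) :
    ∑ F ∈ 𝒞, p ^ #F * (1 - p) ^ (n + 1 - #F) =
      (if b then p else 1 - p) * mu n p (𝒞.image walkTail) := by
  rw [mu, mul_sum,
    sum_image fun F hF G hG => eq_of_walkTail_eq ((h𝒞 F hF).trans (h𝒞 G hG).symm)]
  refine sum_congr rfl fun F hF => ?_
  rw [weight_eq_mul_weight_walkTail, if_congr (h𝒞 F hF) rfl rfl]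

lemma mu_succ (p : ℝ) (𝒜 : Finset (Finset (Fin (n + 1)))) :
    mu (n + 1) p 𝒜 = p * mu n p ((𝒜.filter (0 ∈ ·)).image walkTail) +
      (1 - p) * mu n p ((𝒜.filter (0 ∉ ·)).image walkTail) := by
  rw [mu, ← sum_filter_add_sum_filter_not 𝒜 (0 ∈ ·),
    sum_weight_eq_mu_image_walkTail p _ True (by simp),
    sum_weight_eq_mu_image_walkTail p _ False (by simp), if_pos trivial, if_neg not_false]

end Tail

section Walks

variable {n ℓ : ℕ}

lemma mem_famLine {F : Finset (Fin n)} :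
    F ∈ FamLine n ℓ ↔ ∃ j ≤ n, ℓ + j ≤ #(F.filter (·.val < ℓ + 2 * j)) := by
  simp [FamLine]

lemma card_filter_val_lt_le (s : Finset (Fin n)) (m : ℕ) : #(s.filter (·.val < m)) ≤ m :=
  calc #(s.filter (·.val < m)) ≤ #(univ.filter fun i : Fin n => i.val < m) :=
        card_le_card (filter_subset_filter _ (subset_univ s))
    _ = min n m := Fin.card_filter_val_lt
    _ ≤ m := min_le_right n m

lemma famLine_zero_succ : FamLine 0 (ℓ + 1) = ∅ := by
  ext F
  simp only [mem_famLine, notMem_empty, iff_false, not_exists, not_and, not_le]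
  intro j _
  calc #(F.filter _) ≤ Fintype.card (Fin 0) := card_le_univ _
    _ < ℓ + 1 + j := by simp

lemma walkTail_mem_famLine_of_zero_mem {F : Finset (Fin (n + 1))}
    (hF : F ∈ FamLine (n + 1) (ℓ + 1)) (h0 : 0 ∈ F) : walkTail F ∈ FamLine n ℓ := by
  obtain ⟨j, -, hcard⟩ := mem_famLine.1 hF
  rw [show ℓ + 1 + 2 * j = ℓ + 2 * j + 1 by ring, card_filter_val_lt_succ, if_pos h0] at hcard
  have hle := (card_filter_le (walkTail F) (·.val < ℓ + 2 * j)).trans (card_walkTail_le F)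
  exact mem_famLine.2 ⟨j, by omega, by omega⟩

lemma walkTail_mem_famLine_of_zero_notMem {F : Finset (Fin (n + 1))}
    (hF : F ∈ FamLine (n + 1) (ℓ + 1)) (h0 : 0 ∉ F) : walkTail F ∈ FamLine n (ℓ + 2) := by
  obtain ⟨j, hj, hcard⟩ := mem_famLine.1 hF
  rw [show ℓ + 1 + 2 * j = ℓ + 2 * j + 1 by ring, card_filter_val_lt_succ, if_neg h0] at hcard
  -- `j = 0` is impossible: the first `ℓ + 1` steps would need `ℓ + 1` up steps after a down step.
  obtain ⟨j, rfl⟩ : ∃ j', j = j' + 1 := by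
    have := card_filter_val_lt_le (walkTail F) (ℓ + 2 * j)
    exact Nat.exists_eq_add_one.2 (by omega)
  refine mem_famLine.2 ⟨j, by omega, ?_⟩
  rw [show ℓ + 2 + 2 * j = ℓ + 2 * (j + 1) by ring]
  omega

end Walks

lemma add_one_sub_mul_div_one_sub_sq {p : ℝ} (hq : 1 - p ≠ 0) :
    p + (1 - p) * (p / (1 - p)) ^ 2 = p / (1 - p) := by
  field_simp
  ring

theorem mu_famLine_le {p : ℝ} (hp0 : 0 ≤ p) (hp1 : p < 1) (n ℓ : ℕ) :
    mu n p (FamLine n ℓ) ≤ (p / (1 - p)) ^ ℓ := by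
  have hq : 1 - p ≠ 0 := (sub_pos.2 hp1).ne'
  induction n generalizing ℓ with
  | zero =>
    cases ℓ with
    | zero => simpa using mu_le_one hp0 hp1.le _
    | succ ℓ => rw [famLine_zero_succ, mu, sum_empty]; positivity
  | succ n ih =>
    cases ℓ with
    | zero => simpa using mu_le_one hp0 hp1.le _
    | succ ℓ =>
      calc mu (n + 1) p (FamLine (n + 1) (ℓ + 1))
          ≤ p * mu n p (FamLine n ℓ) + (1 - p) * mu n p (FamLine n (ℓ + 2)) := by
            rw [mu_succ]
            gcongr <;> refine mu_mono hp0 hp1.le (image_subset_iff.2 fun F hF => ?_) <;>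
              rw [mem_filter] at hF
            · exact walkTail_mem_famLine_of_zero_mem hF.1 hF.2
            · exact walkTail_mem_famLine_of_zero_notMem hF.1 hF.2
        _ ≤ p * (p / (1 - p)) ^ ℓ + (1 - p) * (p / (1 - p)) ^ (ℓ + 2) := by
            gcongr <;> exact ih _
        _ = (p + (1 - p) * (p / (1 - p)) ^ 2) * (p / (1 - p)) ^ ℓ := by ring
        _ = (p / (1 - p)) ^ (ℓ + 1) := by rw [add_one_sub_mul_div_one_sub_sq hq, pow_succ']

theorem stmt19_general (n t u v : ℕ) (huvt : 2 * t + 1 ≤ u + v)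
    (p : ℝ) (hp0 : 0 < p) (hp : p < 1 / 2)
    (𝒜 ℬ : Finset (Finset (Fin n)))
    (h𝒜 : 𝒜 ⊆ FamLine n u) (hℬ : ℬ ⊆ FamLine n v) :
    mu n p 𝒜 * mu n p ℬ ≤ (p / (1 - p)) ^ (2 * t + 1) := by
  have hp1 : p < 1 := by linarith
  have hα1 : p / (1 - p) ≤ 1 := by rw [div_le_one (by linarith)]; linarith
  calc mu n p 𝒜 * mu n p ℬ ≤ (p / (1 - p)) ^ u * (p / (1 - p)) ^ v := by
        gcongr
        · exact mu_nonneg hp0.le hp1.le _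
        · exact (mu_mono hp0.le hp1.le h𝒜).trans (mu_famLine_le hp0.le hp1 n u)
        · exact (mu_mono hp0.le hp1.le hℬ).trans (mu_famLine_le hp0.le hp1 n v)
    _ = (p / (1 - p)) ^ (u + v) := (pow_add _ u v).symm
    _ ≤ (p / (1 - p)) ^ (2 * t + 1) := pow_le_pow_of_le_one (by positivity) hα1 huvt

theorem stmt19 (n t u v : ℕ) (hu : 1 ≤ u) (huv : u ≤ v)
    (huvt : 2 * t + 1 ≤ u + v) (hn : 2 * t + 1 ≤ n) (hn3 : 3 ≤ 2 * t + 1)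
    (p : ℝ) (hp0 : 0 < p) (hp : p < 1 / 2)
    (𝒜 ℬ : Finset (Finset (Fin n)))
    (h𝒜 : 𝒜 ⊆ FamLine n u) (hℬ : ℬ ⊆ FamLine n v) :
    mu n p 𝒜 * mu n p ℬ ≤ (p / (1 - p)) ^ (2 * t + 1) :=
  stmt19_general n t u v huvt p hp0 hp 𝒜 ℬ h𝒜 hℬ
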